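/- If T is a minimal counterexample to Vaught's conjecture, then there is a club of ordinals C ⊆ ω₁ such that for every α ∈ C, any two countable models of T of Scott rank at least α are Σ^in_β-elementary equivalent for all β < α. -/

import Mathlib

attribute [local instance] Classical.propDecidable

noncomputable section

/-! ## Basic oracle computability on Cantor space -/

abbrev Cantor := ℕ → Bool

/-- Kleene-style partial recursion relative to an oracle `O`. -/
inductive RecursiveInOracle (O : ℕ →. ℕ) : (ℕ →. ℕ) → Prop
  | oracle : RecursiveInOracle O O
  | zero : RecursiveInOracle O (pure 0)
  | succ : RecursiveInOracle O Nat.succ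
  | left : RecursiveInOracle O ↑fun n : ℕ => n.unpair.1
  | right : RecursiveInOracle O ↑fun n : ℕ => n.unpair.2
  | pair {f g} : RecursiveInOracle O f → RecursiveInOracle O g →
      RecursiveInOracle O fun n => Nat.pair <$> f n <*> g n
  | comp {f g} : RecursiveInOracle O f → RecursiveInOracle O g →
      RecursiveInOracle O fun n => g n >>= f
  | prec {f g} : RecursiveInOracle O f → RecursiveInOracle O g →
      RecursiveInOracle O (Nat.unpaired fun a n =>
        n.rec (f a) fun y IH => do let i ← IH; g (Nat.pair a (Nat.pair y i)))
  | rfind {f} : RecursiveInOracle O f →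
      RecursiveInOracle O fun a => Nat.rfind fun n => (fun m => m = 0) <$> f (Nat.pair a n)

def asOracle (X : Cantor) : ℕ →. ℕ := fun n => Part.some (cond (X n) 1 0)

/-- `TRed X Y` : `X` is Turing reducible to `Y` (`X ≤_T Y`). -/
def TRed (X Y : Cantor) : Prop := RecursiveInOracle (asOracle Y) (asOracle X)

/-- Turing equivalence. -/
def TEquiv (X Y : Cantor) : Prop := TRed X Y ∧ TRed Y X

/-- Turing join `X ⊕ Y`. -/
def joinC (X Y : Cantor) : Cantor := fun n => if n % 2 = 0 then X (n / 2) else Y (n / 2)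

def evens (Z : Cantor) : Cantor := fun n => Z (2 * n)
def odds (Z : Cantor) : Cantor := fun n => Z (2 * n + 1)

/-- `X` is (outright) computable. -/
def ComputableC (X : Cantor) : Prop := TRed X fun _ => false

/-! ## Ordinals computable in an oracle; `ω₁^X` -/

/-- The strict order relation on the field coded by `r` (as a set of codes of pairs). -/
def relOf (r : Cantor) :
    {n : ℕ // r (Nat.pair n n) = true} → {n : ℕ // r (Nat.pair n n) = true} → Prop :=
  fun a b => r (Nat.pair a.1 b.1) = true ∧ a.1 ≠ b.1

/-- `r` codes a well-ordering of order type `α`. -/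
def CodesOrdinal (r : Cantor) (α : Ordinal) : Prop :=
  ∃ h : IsWellOrder _ (relOf r), @Ordinal.type _ (relOf r) h = α

/-- `ω₁^X`: the least ordinal with no `X`-computable copy. -/
def omega1C (X : Cantor) : Ordinal :=
  sInf {α : Ordinal | ¬ ∃ r : Cantor, TRed r X ∧ CodesOrdinal r α}

/-- `α` is admissible: of the form `ω₁^X`. -/
def AdmissibleOrd (α : Ordinal) : Prop := ∃ X : Cantor, omega1C X = α

/-! ## Projective sets and projective determinacy -/

/-- Projective subsets of Cantor space. -/
inductive ProjectiveSet : Set Cantor → Prop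
  | borel {s : Set Cantor} : MeasurableSet s → ProjectiveSet s
  | compl {s} : ProjectiveSet s → ProjectiveSet sᶜ
  | proj {s} : ProjectiveSet s → ProjectiveSet {X | ∃ Y : Cantor, joinC X Y ∈ s}

/-- A function `2^ω → 2^ω` is projective if its graph is. -/
def ProjFun (g : Cantor → Cantor) : Prop := ProjectiveSet {Z | odds Z = g (evens Z)}

/-- History of a play of the Gale–Stewart game where I follows `σ`, II follows `τ`. -/
def histAux (σ τ : List Bool → Bool) : ℕ → List Bool
  | 0 => []
  | n + 1 => histAux σ τ n ++ [if n % 2 = 0 then σ (histAux σ τ n) else τ (histAux σ τ n)]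

/-- The infinite play produced by strategies `σ` (player I) and `τ` (player II). -/
def play (σ τ : List Bool → Bool) : Cantor :=
  fun n => if n % 2 = 0 then σ (histAux σ τ n) else τ (histAux σ τ n)

/-- The game with payoff `A` is determined. -/
def DeterminedG (A : Set Cantor) : Prop :=
  (∃ σ, ∀ τ, play σ τ ∈ A) ∨ (∃ τ, ∀ σ, play σ τ ∉ A)

/-- Projective determinacy. -/
def PD : Prop := ∀ A : Set Cantor, ProjectiveSet A → DeterminedG A

/-! ## Trees on `2^{<ω}` -/

def seg (Y : Cantor) (n : ℕ) : List Bool := (List.range n).map Y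

def IsTree (P : List Bool → Bool) : Prop :=
  P [] = true ∧ ∀ σ b, P (σ ++ [b]) = true → P σ = true

def IsPathT (P : List Bool → Bool) (Y : Cantor) : Prop := ∀ n, P (seg Y n) = true

def IsSplit (P : List Bool → Bool) (σ : List Bool) : Prop :=
  P (σ ++ [false]) = true ∧ P (σ ++ [true]) = true

def PerfectT (P : List Bool → Bool) : Prop :=
  ∀ σ, P σ = true → ∃ τ, σ <+: τ ∧ IsSplit P τ

def PrunedT (P : List Bool → Bool) : Prop :=
  ∀ σ, P σ = true → P (σ ++ [false]) = true ∨ P (σ ++ [true]) = true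

/-- The tree as an element of Cantor space (via coding of finite strings). -/
def treeSet (P : List Bool → Bool) : Cantor := fun n =>
  match (Encodable.decode n : Option (List Bool)) with
  | some σ => P σ
  | none => false

/-- A perfect (pruned) tree all of whose paths compute it. -/
def PointedT (P : List Bool → Bool) : Prop :=
  IsTree P ∧ PrunedT P ∧ PerfectT P ∧ ∀ Y, IsPathT P Y → TRed (treeSet P) Y

/-- Number of splitting levels of `P` along `Y` below `k`. -/
def splitsBelow (P : List Bool → Bool) (Y : Cantor) (k : ℕ) : ℕ :=
  ((List.range k).filter fun j => decide (IsSplit P (seg Y j))).length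

/-- `Y` is the path of `P` obtained by following `X` at every split of `P`. -/
def FollowsT (P : List Bool → Bool) (X Y : Cantor) : Prop :=
  IsPathT P Y ∧ (∀ n, ∃ k, n ≤ k ∧ IsSplit P (seg Y k)) ∧
    ∀ k, IsSplit P (seg Y k) → Y k = X (splitsBelow P Y k)

/-! ## Countable structures and infinitary logic -/

/-- A structure on domain `ℕ` in the relational language whose `i`-th symbol has arity `ar i`. -/
def Str (ar : ℕ → ℕ) := (i : ℕ) → (Fin (ar i) → ℕ) → Prop

/-- `L_{ω₁,ω}` formulas (variables indexed by `ℕ`, countable conjunctions). -/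
inductive IForm (ar : ℕ → ℕ) : Type
  | atom (i : ℕ) (v : Fin (ar i) → ℕ)
  | eq (x y : ℕ)
  | not (φ : IForm ar)
  | conj (φs : ℕ → IForm ar)
  | all (x : ℕ) (φ : IForm ar)

variable {ar : ℕ → ℕ}

def Sat (A : Str ar) : (ℕ → ℕ) → IForm ar → Prop
  | s, .atom i v => A i fun j => s (v j)
  | s, .eq x y => s x = s y
  | s, .not φ => ¬ Sat A s φ
  | s, .conj φs => ∀ n, Sat A s (φs n)
  | s, .all x φ => ∀ a : ℕ, Sat A (Function.update s x a) φ

def freeVars : IForm ar → Set ℕ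
  | .atom _ v => Set.range v
  | .eq x y => {x, y}
  | .not φ => freeVars φ
  | .conj φs => ⋃ n, freeVars (φs n)
  | .all x φ => freeVars φ \ {x}

/-- A sentence: no free variables. -/
def SentenceF (φ : IForm ar) : Prop := freeVars φ = ∅

/-- Satisfaction of a sentence. -/
def SatS (A : Str ar) (φ : IForm ar) : Prop := Sat A (fun _ => 0) φ

def IForm.disj (φs : ℕ → IForm ar) : IForm ar := .not (.conj fun n => .not (φs n))
def IForm.ex (x : ℕ) (φ : IForm ar) : IForm ar := .not (.all x (.not φ))
def IForm.exs (l : List ℕ) (φ : IForm ar) : IForm ar := l.foldr IForm.ex φ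
def IForm.alls (l : List ℕ) (φ : IForm ar) : IForm ar := l.foldr IForm.all φ
def IForm.and (φ ψ : IForm ar) : IForm ar := .conj fun n => if n = 0 then φ else ψ

/-- Finitary quantifier-free formulas. -/
inductive QFree : IForm ar → Prop
  | atom {i v} : QFree (.atom i v)
  | eq {x y} : QFree (.eq x y)
  | not {φ} : QFree φ → QFree (.not φ)
  | and {φ ψ} : QFree φ → QFree ψ → QFree (φ.and ψ)

mutual
/-- `Σ^in_α` formulas. -/
inductive IsSig : Ordinal.{0} → IForm ar → Prop
  | qf {α : Ordinal} {φ : IForm ar} : QFree φ → IsSig α φ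
  | comp {α : Ordinal} (β : ℕ → Ordinal) (vs : ℕ → List ℕ) (φs : ℕ → IForm ar) :
      (∀ n, β n < α) → (∀ n, IsPi (β n) (φs n)) →
      IsSig α (IForm.disj fun n => IForm.exs (vs n) (φs n))
/-- `Π^in_α` formulas. -/
inductive IsPi : Ordinal.{0} → IForm ar → Prop
  | qf {α : Ordinal} {φ : IForm ar} : QFree φ → IsPi α φ
  | comp {α : Ordinal} (β : ℕ → Ordinal) (vs : ℕ → List ℕ) (φs : ℕ → IForm ar) :
      (∀ n, β n < α) → (∀ n, IsSig (β n) (φs n)) →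
      IsPi α (.conj fun n => IForm.alls (vs n) (φs n))
end

/-- `Σ^in_α`-elementary equivalence (`A ≡_α B`). -/
def SigEquiv (α : Ordinal) (A B : Str ar) : Prop :=
  ∀ φ : IForm ar, IsSig α φ → SentenceF φ → (SatS A φ ↔ SatS B φ)

/-- The assignment sending variable `i` to the `i`-th entry of the tuple `a`. -/
def asn (a : List ℕ) : ℕ → ℕ := fun i => a.getD i 0

/-- Every `Π^in_α` formula (with free variables among the tuple) true of `ā` in `A`
is true of `b̄` in `B`. -/
def PiTypeSub (α : Ordinal) (A : Str ar) (a : List ℕ) (B : Str ar) (b : List ℕ) : Prop :=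
  ∀ φ : IForm ar, IsPi α φ → freeVars φ ⊆ Set.Iio a.length →
    Sat A (asn a) φ → Sat B (asn b) φ

/-! ## Back-and-forth relations -/

/-- `ā` and `b̄` satisfy the same atomic formulas among the first `|ā|` symbols. -/
def atomEquiv (A : Str ar) (a : List ℕ) (B : Str ar) (b : List ℕ) : Prop :=
  a.length = b.length ∧
  (∀ p q, p < a.length → q < a.length →
    (a.getD p 0 = a.getD q 0 ↔ b.getD p 0 = b.getD q 0)) ∧
  (∀ i, i < a.length → ∀ v : Fin (ar i) → ℕ, (∀ j, v j < a.length) →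
    (A i (fun j => a.getD (v j) 0) ↔ B i fun j => b.getD (v j) 0))

/-- The `α`-back-and-forth relations `(A,ā) ≤_α (B,b̄)`. -/
def BFLe (α : Ordinal.{0}) (A : Str ar) (a : List ℕ) (B : Str ar) (b : List ℕ) : Prop :=
  if α = 0 then atomEquiv A a B b
  else ∀ (d : List ℕ) (γ : Ordinal.{0}) (hγ : γ < α),
    ∃ c : List ℕ, c.length = d.length ∧ BFLe γ B (b ++ d) A (a ++ c)
termination_by α
decreasing_by exact hγ

/-- `(A,ā) ≡_α (B,b̄)`. -/
def BFEq (α : Ordinal) (A : Str ar) (a : List ℕ) (B : Str ar) (b : List ℕ) : Prop :=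
  BFLe α A a B b ∧ BFLe α B b A a

/-- `(C,c̄)` belongs to `ext_β(A,ā)`: it is `≤_β` some `(A, ād̄)`. -/
def ExtMem (β : Ordinal) (C : Str ar) (c : List ℕ) (A : Str ar) (a : List ℕ) : Prop :=
  ∃ d : List ℕ, c.length = a.length + d.length ∧ BFLe β C c A (a ++ d)

/-- Re-arrangement `π_ι` of a tuple. -/
def projT (ι : List ℕ) (a : List ℕ) : List ℕ := ι.map fun j => a.getD j 0

/-! ## Isomorphism, diagrams, copies, spectra, Scott rank -/

def IsoStr (A B : Str ar) : Prop :=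
  ∃ e : ℕ ≃ ℕ, ∀ i v, A i v ↔ B i fun j => e (v j)

/-- `D` is (the characteristic function of) the atomic diagram of `B`. -/
def DiagOf (B : Str ar) (D : Cantor) : Prop :=
  ∀ i (v : Fin (ar i) → ℕ),
    (B i v ↔ D (Nat.pair i (Encodable.encode (List.ofFn v))) = true)

/-- `X` computes a copy of `A`. -/
def ComputesCopy (X : Cantor) (A : Str ar) : Prop :=
  ∃ B D, IsoStr A B ∧ DiagOf B D ∧ TRed D X

/-- `ω₁^A = min{ω₁^X : X computes a copy of A}`. -/
def omega1Str (A : Str ar) : Ordinal :=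
  sInf {β : Ordinal | ∃ X, ComputesCopy X A ∧ omega1C X = β}

/-- `ω₁^{A,Y} = min{ω₁^X : X ≥_T Y, X computes a copy of A}`. -/
def omega1StrRel (A : Str ar) (Y : Cantor) : Ordinal :=
  sInf {β : Ordinal | ∃ X, TRed Y X ∧ ComputesCopy X A ∧ omega1C X = β}

/-- The two tuples satisfy the same `L_{ω₁,ω}` formulas in `A`. -/
def AllTypeEq (A : Str ar) (a b : List ℕ) : Prop :=
  ∀ φ : IForm ar, freeVars φ ⊆ Set.Iio a.length → (Sat A (asn a) φ ↔ Sat A (asn b) φ)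

/-- `ρ_A(ā)`: least `α` such that the `Π^in_α` type of `ā` determines its full type. -/
def rhoSR (A : Str ar) (a : List ℕ) : Ordinal :=
  sInf {α : Ordinal | ∀ b : List ℕ, b.length = a.length →
    PiTypeSub α A a A b → AllTypeEq A a b}

/-- Scott rank. -/
def SR (A : Str ar) : Ordinal := ⨆ a : List ℕ, rhoSR A a + 1

/-! ## Counting models -/

def CountablyManyModels (T : IForm ar) : Prop :=
  ∃ S : Set (Str ar), S.Countable ∧ ∀ A, SatS A T → ∃ B ∈ S, IsoStr A B

/-- `T` is scattered: countably many `≡_α`-classes of models for each `α < ω₁`. -/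
def ScatteredT (T : IForm ar) : Prop :=
  ∀ α : Ordinal, α < (Cardinal.aleph 1).ord →
    ∃ S : Set (Str ar), S.Countable ∧ ∀ A, SatS A T → ∃ B ∈ S, SatS B T ∧ SigEquiv α A B

/-- Counterexample to Vaught's conjecture. -/
def CexVC (T : IForm ar) : Prop := ScatteredT T ∧ ¬ CountablyManyModels T

/-- `T` has exactly `ℵ₁` many models up to isomorphism. -/
def Aleph1ManyModels (T : IForm ar) : Prop :=
  Cardinal.mk (Quot fun A B : {M : Str ar // SatS M T} => IsoStr A.1 B.1) = Cardinal.aleph 1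

/-- Minimal counterexample to Vaught's conjecture. -/
def MinimalCex (T : IForm ar) : Prop :=
  Aleph1ManyModels T ∧ ScatteredT T ∧
    ∀ φ : IForm ar, SentenceF φ →
      CountablyManyModels (T.and φ) ∨ CountablyManyModels (T.and φ.not)

/-! ## Computable infinitary formulas -/

/-- `FCodes ar c φ`: `c` is a code of the computable infinitary formula `φ`. -/
inductive FCodes (ar : ℕ → ℕ) : ℕ → IForm ar → Prop
  | atom (i : ℕ) (v : Fin (ar i) → ℕ) :
      FCodes ar (Nat.pair 0 (Nat.pair i (Encodable.encode (List.ofFn fun j => v j)))) (.atom i v)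
  | eq (x y : ℕ) : FCodes ar (Nat.pair 1 (Nat.pair x y)) (.eq x y)
  | not {c φ} : FCodes ar c φ → FCodes ar (Nat.pair 2 c) (.not φ)
  | all {c φ} (x : ℕ) : FCodes ar c φ → FCodes ar (Nat.pair 3 (Nat.pair x c)) (.all x φ)
  | conj (c : Nat.Partrec.Code) (g : ℕ → ℕ) (φs : ℕ → IForm ar) :
      (∀ n, g n ∈ c.eval n) → (∀ n, FCodes ar (g n) (φs n)) →
      FCodes ar (Nat.pair 4 (Encodable.encode c)) (.conj φs)

/-- A computable infinitary (`L^c_{ω₁,ω}`) formula. -/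
def ComputableForm (φ : IForm ar) : Prop := ∃ c, FCodes ar c φ

/-! ## Finite diagrams -/

/-- `m` codes an atomic fact (among the first `|ā|` symbols) true of `ā` in `A`. -/
def FinDiagMem (A : Str ar) (a : List ℕ) (m : ℕ) : Prop :=
  ∃ (i : ℕ) (l : List ℕ), m = Nat.pair i (Encodable.encode l) ∧ i < a.length ∧
    l.length = ar i ∧ (∀ j ∈ l, j < a.length) ∧ A i fun j => a.getD (l.getD (j : ℕ) 0) 0

def tuplesBelow (k : ℕ) : ℕ → List (List ℕ)
  | 0 => [[]]
  | n + 1 => (List.range k).flatMap fun x => (tuplesBelow k n).map fun l => x :: l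

def atomCodes (ar : ℕ → ℕ) (k : ℕ) : List ℕ :=
  (List.range k).flatMap fun i => (tuplesBelow k (ar i)).map fun l => Nat.pair i (Encodable.encode l)

/-- A number coding the atomic diagram `D_A(ā)` of the tuple `ā` in `A`
(over the first `|ā|` symbols of the language). -/
def diagCode (A : Str ar) (a : List ℕ) : ℕ :=
  Nat.pair a.length <| Encodable.encode <|
    (atomCodes ar a.length).filter fun m => decide (FinDiagMem A a m)

/-- A computably enumerable set of naturals. -/
def CEset (S : Set ℕ) : Prop := ∃ c : Nat.Partrec.Code, ∀ n, n ∈ S ↔ (c.eval n).Dom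

/-! ## Hyperarithmetic reducibility (via the Δ¹₁ = HYP characterization) -/

def Pi11In (X : Cantor) (S : Set ℕ) : Prop :=
  ∃ R : Cantor, TRed R X ∧ ∀ n, n ∈ S ↔
    ∀ f : ℕ → ℕ, ∃ k, R (Nat.pair n (Encodable.encode ((List.range k).map f))) = true

/-- `Y` is hyperarithmetic in `X` (i.e. `Δ¹₁(X)`). -/
def HypIn (Y X : Cantor) : Prop :=
  Pi11In X {n | Y n = true} ∧ Pi11In X {n | Y n = false}

/-- `A` has an `X`-hyperarithmetic copy. -/
def HypCopy (X : Cantor) (A : Str ar) : Prop :=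
  ∃ B D, IsoStr A B ∧ DiagOf B D ∧ HypIn D X

/-! ## The theory `T_α` of the `α`-back-and-forth structure, semantically -/

/-- A structure in the extended language `L_α`: a base `L`-structure together with
interpretations of the relations `φ_σ`, where the `β`-bf-type `σ` is represented by a
pair `(C, c̄)` (a model of `T` with a distinguished tuple). -/
structure ExtModel (ar : ℕ → ℕ) where
  base : Str ar
  Phi : Ordinal.{0} → Str ar → List ℕ → List ℕ → Prop

/-- Interpretation of `ψ_σ(b̄) := ⋁_{σ' ∈ bf_α, (σ')_β = σ} φ_{σ'}(b̄)`,
with `σ` represented by `(C, c̄)`. -/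
def PsiH (T : IForm ar) (α : Ordinal.{0}) (M : ExtModel ar) (β : Ordinal.{0})
    (C : Str ar) (c b : List ℕ) : Prop :=
  ∃ (C' : Str ar) (c' : List ℕ), SatS C' T ∧ c'.length = b.length ∧
    BFEq β C' c' C c ∧ M.Phi α C' c' b

/-- `M` is a model of the theory `T_α` axiomatizing the `α`-bf-structure of `T`:
(invariance of the symbols `φ_σ` in the representative of `σ`), (T1) every tuple realizes
exactly one `β`-bf-type, (T2) the recursive definition of `φ_σ`, and (T3) the
implications of `ψ_σ`. -/
def ModelsTAlpha (T : IForm ar) (α : Ordinal.{0}) (M : ExtModel ar) : Prop :=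
  (∀ β ≤ α, ∀ (C : Str ar) (c : List ℕ) (C' : Str ar) (c' : List ℕ) (b : List ℕ),
      SatS C T → SatS C' T → BFEq β C c C' c' → (M.Phi β C c b ↔ M.Phi β C' c' b)) ∧
  (∀ b : List ℕ, ∃ (C : Str ar) (c : List ℕ), SatS C T ∧ c.length = b.length ∧
      M.Phi α C c b) ∧
  (∀ β < α, ∀ (b : List ℕ) (C : Str ar) (c : List ℕ) (C' : Str ar) (c' : List ℕ),
      SatS C T → SatS C' T → PsiH T α M β C c b → PsiH T α M β C' c' b →
      BFEq β C c C' c') ∧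
  (∀ β ≤ α, ∀ (C : Str ar) (c : List ℕ), SatS C T → ∀ b : List ℕ,
      (M.Phi β C c b ↔ b.length = c.length ∧
        (β = 0 → atomEquiv C c M.base b) ∧
        (∀ γ < β, ∀ (D : Str ar) (d : List ℕ), SatS D T → ¬ ExtMem γ D d C c →
          ∀ y : List ℕ, d.length = b.length + y.length → ¬ M.Phi γ D d (b ++ y)))) ∧
  (∀ β < α, ∀ (C : Str ar) (c b : List ℕ), SatS C T → PsiH T α M β C c b →
      M.Phi β C c b ∧ ∀ γ < β, ∀ (D : Str ar) (d : List ℕ), SatS D T →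
        ExtMem γ D d C c →
        ∃ y : List ℕ, d.length = b.length + y.length ∧ M.Phi γ D d (b ++ y))

/-! ## Presentations of the `α`-back-and-forth structure -/

/-- A presentation `𝔹` of the `α`-bf-structure of `T`: an enumeration of the bf-types
of levels `≤ α` (given by levels and representatives), together with an oracle `B`
coding the relations `≤_β`, the projections `(·)_β` and `π_ι`, the extension relations
`ext`, and the atomic diagrams of the `0`-bf-types. -/
structure BFPres (ar : ℕ → ℕ) (T : IForm ar) (α : Ordinal.{0}) where
  B : Cantor
  lvl : ℕ → Ordinal.{0}
  repS : ℕ → Str ar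
  repT : ℕ → List ℕ
  lvl_le : ∀ n, lvl n ≤ α
  rep_models : ∀ n, SatS (repS n) T
  surj : ∀ β ≤ α, ∀ (A : Str ar) (a : List ℕ), SatS A T →
    ∃ n, lvl n = β ∧ (repT n).length = a.length ∧ BFEq β (repS n) (repT n) A a
  le_code : ∀ m n, (B (Nat.pair 0 (Nat.pair m n)) = true ↔
    lvl m = lvl n ∧ BFLe (lvl m) (repS m) (repT m) (repS n) (repT n))
  proj_code : ∀ m n, (B (Nat.pair 1 (Nat.pair m n)) = true ↔
    lvl m ≤ lvl n ∧ BFEq (lvl m) (repS m) (repT m) (repS n) (repT n))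
  ext_code : ∀ m n, (B (Nat.pair 2 (Nat.pair m n)) = true ↔
    lvl m < lvl n ∧ ExtMem (lvl m) (repS m) (repT m) (repS n) (repT n))
  pi_code : ∀ m n (ι : List ℕ),
    (B (Nat.pair 3 (Nat.pair m (Nat.pair n (Encodable.encode ι)))) = true ↔
      lvl m = lvl n ∧ (∀ j ∈ ι, j < (repT n).length) ∧
      BFEq (lvl m) (repS m) (repT m) (repS n) (projT ι (repT n)))
  diag_code : ∀ m k, (B (Nat.pair 4 (Nat.pair m k)) = true ↔
    lvl m = 0 ∧ FinDiagMem (repS m) (repT m) k)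

end

/-!
Fix `β < ω₁`. By scatteredness the models of `T` fall into countably many `≡_β`-classes. If two
models are not `≡_β`, a `Σ^in_β` sentence `φ` separates them, and by minimality `T ∧ φ` or
`T ∧ ¬φ` has only countably many models: so of any two distinct classes, one contains only
countably many isomorphism types. As `T` has `ℵ₁` models, some class is uncountable, and then
all models outside it lie in countably many isomorphism types. Every formula of `L_{ω₁,ω}` is
equivalent to a `Π^in_γ` formula with `γ < ω₁`, so Scott ranks are countable, and those of the
models outside the big class are bounded by some `δ_β < ω₁`: any two models of Scott rank
`≥ δ_β` are `≡_β`. The ordinals below `ω₁` closed under `β ↦ δ_β` form the required club.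
-/

open Cardinal Ordinal Set

section Formulas

variable {ar : ℕ → ℕ}

theorem sat_congr {A : Str ar} {φ : IForm ar} {s t : ℕ → ℕ}
    (h : ∀ x ∈ freeVars φ, s x = t x) : Sat A s φ ↔ Sat A t φ := by
  induction φ generalizing s t with
  | atom i v =>
    change A i _ ↔ A i _
    rw [funext fun j => h (v j) ⟨j, rfl⟩]
  | eq x y => exact Eq.congr (h x (by simp [freeVars])) (h y (by simp [freeVars]))
  | not φ ih => exact not_congr (ih h)
  | conj φs ih => exact forall_congr' fun n => ih n fun x hx => h x (mem_iUnion.2 ⟨n, hx⟩)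
  | all x φ ih =>
    refine forall_congr' fun a => ih fun y hy => ?_
    rcases eq_or_ne y x with rfl | hyx
    · simp
    · simpa only [Function.update_of_ne hyx] using h y ⟨hy, hyx⟩

theorem sat_equiv_comp {A B : Str ar} {e : ℕ ≃ ℕ} (he : ∀ i v, A i v ↔ B i fun j => e (v j))
    (φ : IForm ar) (s : ℕ → ℕ) : Sat A s φ ↔ Sat B (e ∘ s) φ := by
  induction φ generalizing s with
  | atom i v => exact he i _
  | eq x y => exact e.apply_eq_iff_eq.symm
  | not φ ih => exact not_congr (ih s)
  | conj φs ih => exact forall_congr' fun n => ih n s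
  | all x φ ih =>
    refine e.forall_congr fun a => ?_
    rw [ih, Function.comp_update]

theorem SatS.and {A : Str ar} {φ ψ : IForm ar} (hφ : SatS A φ) (hψ : SatS A ψ) :
    SatS A (φ.and ψ) := by
  intro n
  dsimp only
  split_ifs
  exacts [hφ, hψ]

theorem IsPi.mono {α α' : Ordinal} {φ : IForm ar} (h : IsPi α φ) (hle : α ≤ α') : IsPi α' φ := by
  cases h with
  | qf h => exact .qf h
  | comp β vs φs hβ hφ => exact .comp β vs φs (fun n => (hβ n).trans_le hle) hφ

theorem iSup_add_one_lt_omega_one {γ : ℕ → Ordinal} (h : ∀ n, γ n < ω₁) : ⨆ n, γ n + 1 < ω₁ :=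
  iSup_lt_omega_one fun n => (isSuccLimit_omega 1).add_one_lt (h n)

namespace IForm

def HasNormalForm (P : Ordinal → IForm ar → Prop) (φ : IForm ar) : Prop :=
  ∃ γ < ω₁, ∃ ψ : IForm ar, P γ ψ ∧ freeVars ψ ⊆ freeVars φ ∧ ∀ A s, Sat A s ψ ↔ Sat A s φ

variable {P : Ordinal → IForm ar → Prop} {φ : IForm ar}

theorem HasNormalForm.congr {φ' : IForm ar} (h : φ.HasNormalForm P)
    (hfv : freeVars φ ⊆ freeVars φ') (hsat : ∀ A s, Sat A s φ ↔ Sat A s φ') :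
    φ'.HasNormalForm P := by
  obtain ⟨γ, hγ, ψ, hψ, hfvψ, hsatψ⟩ := h
  exact ⟨γ, hγ, ψ, hψ, hfvψ.trans hfv, fun A s => (hsatψ A s).trans (hsat A s)⟩

theorem HasNormalForm.of_qfree (hP : ∀ ψ, QFree ψ → P 0 ψ) (h : QFree φ) :
    φ.HasNormalForm P :=
  ⟨0, omega_pos 1, φ, hP φ h, subset_rfl, fun _ _ => Iff.rfl⟩

theorem sat_exs_congr {A : Str ar} {φ ψ : IForm ar} (h : ∀ s, Sat A s φ ↔ Sat A s ψ) :
    ∀ (l : List ℕ) (s : ℕ → ℕ), Sat A s (exs l φ) ↔ Sat A s (exs l ψ)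
  | [], s => h s
  | _ :: l, _ => not_congr <| forall_congr' fun _ => not_congr (sat_exs_congr h l _)

theorem sat_alls_congr {A : Str ar} {φ ψ : IForm ar} (h : ∀ s, Sat A s φ ↔ Sat A s ψ) :
    ∀ (l : List ℕ) (s : ℕ → ℕ), Sat A s (alls l φ) ↔ Sat A s (alls l ψ)
  | [], s => h s
  | _ :: l, _ => forall_congr' fun _ => sat_alls_congr h l _

theorem freeVars_exs_mono {φ ψ : IForm ar} (h : freeVars φ ⊆ freeVars ψ) :
    ∀ l : List ℕ, freeVars (exs l φ) ⊆ freeVars (exs l ψ)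
  | [] => h
  | _ :: l => sdiff_subset_sdiff_left (freeVars_exs_mono h l)

theorem freeVars_alls_mono {φ ψ : IForm ar} (h : freeVars φ ⊆ freeVars ψ) :
    ∀ l : List ℕ, freeVars (alls l φ) ⊆ freeVars (alls l ψ)
  | [] => h
  | _ :: l => sdiff_subset_sdiff_left (freeVars_alls_mono h l)

theorem hasNormalForm_disj_exs {vs : ℕ → List ℕ} {φs : ℕ → IForm ar}
    (h : ∀ n, (φs n).HasNormalForm IsPi) :
    (disj fun n => exs (vs n) (φs n)).HasNormalForm IsSig := by
  choose γ hγ ψ hψ hfv hsat using h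
  refine ⟨_, iSup_add_one_lt_omega_one hγ, disj fun n => exs (vs n) (ψ n),
    .comp γ vs ψ (lt_iSup_add_one γ) hψ, ?_, ?_⟩
  · exact iUnion_mono fun n => freeVars_exs_mono (hfv n) (vs n)
  · exact fun A s => not_congr <| forall_congr' fun n =>
      not_congr (sat_exs_congr (hsat n A) (vs n) s)

theorem hasNormalForm_conj_alls {vs : ℕ → List ℕ} {φs : ℕ → IForm ar}
    (h : ∀ n, (φs n).HasNormalForm IsSig) :
    (conj fun n => alls (vs n) (φs n)).HasNormalForm IsPi := by
  choose γ hγ ψ hψ hfv hsat using h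
  refine ⟨_, iSup_add_one_lt_omega_one hγ, conj fun n => alls (vs n) (ψ n),
    .comp γ vs ψ (lt_iSup_add_one γ) hψ, ?_, ?_⟩
  · exact iUnion_mono fun n => freeVars_alls_mono (hfv n) (vs n)
  · exact fun A s => forall_congr' fun n => sat_alls_congr (hsat n A) (vs n) s

theorem HasNormalForm.isSig (h : φ.HasNormalForm IsPi) : φ.HasNormalForm IsSig :=
  (hasNormalForm_disj_exs (vs := fun _ => []) fun _ => h).congr
    (iUnion_subset fun _ => subset_rfl) fun _ _ => not_forall_not.trans (exists_const ℕ)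

theorem HasNormalForm.isPi (h : φ.HasNormalForm IsSig) : φ.HasNormalForm IsPi :=
  (hasNormalForm_conj_alls (vs := fun _ => []) fun _ => h).congr
    (iUnion_subset fun _ => subset_rfl) fun _ _ => forall_const ℕ

/-- Carrying a normal form of `¬φ` along avoids a separate `Σ`/`Π` duality: `¬⋀ₙ φₙ` and
`¬∀x φ` are handled as `⋁ₙ ¬φₙ` and `∃x ¬φ`. -/
theorem hasNormalForm_and_hasNormalForm_not (φ : IForm ar) :
    φ.HasNormalForm IsPi ∧ (not φ).HasNormalForm IsPi := by
  induction φ with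
  | atom i v => exact ⟨.of_qfree (fun _ => .qf) .atom, .of_qfree (fun _ => .qf) (.not .atom)⟩
  | eq x y => exact ⟨.of_qfree (fun _ => .qf) .eq, .of_qfree (fun _ => .qf) (.not .eq)⟩
  | not φ ih => exact ⟨ih.2, ih.1.congr subset_rfl fun _ _ => not_not.symm⟩
  | conj φs ih =>
    refine ⟨(hasNormalForm_conj_alls (vs := fun _ => []) fun n => (ih n).1.isSig).congr
      subset_rfl fun _ _ => Iff.rfl, ?_⟩
    refine (hasNormalForm_disj_exs (vs := fun _ => []) fun n => (ih n).2).isPi.congr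
      subset_rfl fun _ _ => ?_
    exact not_congr (forall_congr' fun _ => not_not)
  | all x φ ih =>
    refine ⟨(hasNormalForm_conj_alls (vs := fun _ => [x]) fun _ => ih.1.isSig).congr
      (iUnion_subset fun _ => subset_rfl) fun _ _ => forall_const ℕ, ?_⟩
    refine (hasNormalForm_disj_exs (vs := fun _ => [x]) fun _ => ih.2).isPi.congr
      (iUnion_subset fun _ => subset_rfl) fun _ _ => ?_
    exact not_congr <| (forall_const ℕ).trans <| not_not.trans <| forall_congr' fun _ => not_not

end IForm

end Formulas

section ScottRank

variable {ar : ℕ → ℕ}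

theorem PiTypeSub.mono {α α' : Ordinal} {A B : Str ar} {a b : List ℕ}
    (h : PiTypeSub α' A a B b) (hle : α ≤ α') : PiTypeSub α A a B b :=
  fun φ hφ => h φ (hφ.mono hle)

theorem IForm.HasNormalForm.exists_not_piTypeSub {θ : IForm ar} (h : θ.HasNormalForm IsPi)
    {A B : Str ar} {a b : List ℕ} (hfv : freeVars θ ⊆ Iio a.length)
    (ha : Sat A (asn a) θ) (hb : ¬ Sat B (asn b) θ) : ∃ γ < ω₁, ¬ PiTypeSub γ A a B b := by
  obtain ⟨γ, hγ, ψ, hψ, hfvψ, hsat⟩ := h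
  exact ⟨γ, hγ, fun hsub => hb <| (hsat B _).1 <|
    hsub ψ hψ (hfvψ.trans hfv) ((hsat A _).2 ha)⟩

theorem exists_piTypeSub_imp_allTypeEq (A : Str ar) (a b : List ℕ) :
    ∃ γ < ω₁, PiTypeSub γ A a A b → AllTypeEq A a b := by
  by_cases h : AllTypeEq A a b
  · exact ⟨0, omega_pos 1, fun _ => h⟩
  obtain ⟨γ, hγ, hsub⟩ : ∃ γ < ω₁, ¬ PiTypeSub γ A a A b := by
    simp only [AllTypeEq, not_forall] at h
    obtain ⟨φ, hfv, hφ⟩ := h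
    have hnf := IForm.hasNormalForm_and_hasNormalForm_not φ
    by_cases ha : Sat A (asn a) φ
    · exact hnf.1.exists_not_piTypeSub hfv ha fun hb => hφ (iff_of_true ha hb)
    · exact hnf.2.exists_not_piTypeSub hfv ha fun hb => hφ (iff_of_false ha hb)
  exact ⟨γ, hγ, hsub.elim⟩

theorem rhoSR_lt_omega_one (A : Str ar) (a : List ℕ) : rhoSR A a < ω₁ := by
  choose γ hγ hγa using exists_piTypeSub_imp_allTypeEq A a
  refine (csInf_le' ?_).trans_lt (iSup_lt_omega_one hγ)
  exact fun b _ hsub => hγa b (hsub.mono (Ordinal.le_iSup γ b))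

theorem SR_lt_omega_one (A : Str ar) : SR A < ω₁ :=
  iSup_lt_omega_one fun a => (isSuccLimit_omega 1).add_one_lt (rhoSR_lt_omega_one A a)

section Iso

variable {A B : Str ar} {e : ℕ ≃ ℕ} (he : ∀ i v, A i v ↔ B i fun j => e (v j))
include he

theorem sat_asn_map {φ : IForm ar} {a : List ℕ} (hfv : freeVars φ ⊆ Iio a.length) :
    Sat B (asn (a.map e)) φ ↔ Sat A (asn a) φ := by
  rw [sat_equiv_comp he φ (asn a)]
  refine sat_congr fun x hx => ?_
  have hx : x < a.length := hfv hx
  simp [asn, List.getElem?_eq_getElem hx]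

theorem piTypeSub_map_iff {α : Ordinal} {a b : List ℕ} (hlen : b.length = a.length) :
    PiTypeSub α B (a.map e) B (b.map e) ↔ PiTypeSub α A a A b := by
  simp only [PiTypeSub, List.length_map]
  refine forall_congr' fun φ => forall_congr' fun _ => forall_congr' fun hfv => ?_
  rw [sat_asn_map he hfv, sat_asn_map he (hlen ▸ hfv)]

theorem allTypeEq_map_iff {a b : List ℕ} (hlen : b.length = a.length) :
    AllTypeEq B (a.map e) (b.map e) ↔ AllTypeEq A a b := by
  simp only [AllTypeEq, List.length_map]
  refine forall_congr' fun φ => forall_congr' fun hfv => ?_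
  rw [sat_asn_map he hfv, sat_asn_map he (hlen ▸ hfv)]

theorem rhoSR_map (a : List ℕ) : rhoSR B (a.map e) = rhoSR A a := by
  refine congrArg sInf (ext fun α => ((Equiv.listEquivOfEquiv e).forall_congr fun b => ?_).symm)
  change _ ↔ ((b.map e).length = (a.map e).length → _)
  simp only [List.length_map]
  exact imp_congr_right fun hlen =>
    imp_congr (piTypeSub_map_iff he hlen).symm (allTypeEq_map_iff he hlen).symm

end Iso

theorem SR_eq_of_isoStr {A B : Str ar} (h : IsoStr A B) : SR A = SR B := by
  obtain ⟨e, he⟩ := h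
  calc SR A = ⨆ a : List ℕ, rhoSR B (a.map e) + 1 := by simp only [SR, rhoSR_map he]
    _ = SR B := (Equiv.listEquivOfEquiv e).iSup_comp (g := fun b => rhoSR B b + 1)

end ScottRank

section Counting

variable {ar : ℕ → ℕ}

theorem IsoStr.symm {A B : Str ar} (h : IsoStr A B) : IsoStr B A := by
  obtain ⟨e, he⟩ := h
  exact ⟨e.symm, fun i v => by simpa using (he i fun j => e.symm (v j)).symm⟩

theorem IsoStr.trans {A B C : Str ar} (h : IsoStr A B) (h' : IsoStr B C) : IsoStr A C := by
  obtain ⟨e, he⟩ := h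
  obtain ⟨f, hf⟩ := h'
  exact ⟨e.trans f, fun i v => (he i v).trans (hf i _)⟩

theorem SigEquiv.symm {α : Ordinal} {A B : Str ar} (h : SigEquiv α A B) : SigEquiv α B A :=
  fun φ hφ hsent => (h φ hφ hsent).symm

theorem SigEquiv.trans {α : Ordinal} {A B C : Str ar} (h : SigEquiv α A B)
    (h' : SigEquiv α B C) : SigEquiv α A C :=
  fun φ hφ hsent => (h φ hφ hsent).trans (h' φ hφ hsent)

def CountablyManyUpToIso (K : Set (Str ar)) : Prop :=
  ∃ W : Set (Str ar), W.Countable ∧ ∀ A ∈ K, ∃ B ∈ W, IsoStr A B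

theorem CountablyManyUpToIso.mono {K K' : Set (Str ar)} (h : CountablyManyUpToIso K')
    (hK : K ⊆ K') : CountablyManyUpToIso K :=
  let ⟨W, hW, hcov⟩ := h
  ⟨W, hW, fun A hA => hcov A (hK hA)⟩

theorem countablyManyUpToIso_biUnion {ι : Type*} {S : Set ι} {F : ι → Set (Str ar)}
    (hS : S.Countable) (hF : ∀ s ∈ S, CountablyManyUpToIso (F s)) :
    CountablyManyUpToIso (⋃ s ∈ S, F s) := by
  choose! W hWc hW using hF
  refine ⟨⋃ s ∈ S, W s, hS.biUnion hWc, fun A hA => ?_⟩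
  obtain ⟨s, hs, hAs⟩ := mem_iUnion₂.1 hA
  obtain ⟨B, hB, hAB⟩ := hW s hs A hAs
  exact ⟨B, mem_iUnion₂.2 ⟨s, hs, hB⟩, hAB⟩

theorem CountablyManyUpToIso.exists_SR_lt {K : Set (Str ar)} (h : CountablyManyUpToIso K) :
    ∃ δ < ω₁, ∀ N ∈ K, SR N < δ := by
  obtain ⟨W, hW, hcov⟩ := h
  have := hW.to_subtype
  refine ⟨⨆ w : W, SR w.1 + 1,
    iSup_lt_omega_one fun w => (isSuccLimit_omega 1).add_one_lt (SR_lt_omega_one w.1),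
    fun N hN => ?_⟩
  obtain ⟨w, hw, hNw⟩ := hcov N hN
  rw [SR_eq_of_isoStr hNw]
  exact lt_iSup_add_one (fun w : W => SR w.1) ⟨w, hw⟩

theorem Aleph1ManyModels.not_countablyManyUpToIso {T : IForm ar} (h : Aleph1ManyModels T) :
    ¬ CountablyManyUpToIso {A | SatS A T} := by
  rintro ⟨W, hW, hcov⟩
  choose f hfW hf using fun q : Quot fun A B : {M : Str ar // SatS M T} => IsoStr A.1 B.1 =>
    hcov q.out.1 q.out.2
  have hinj : Function.Injective fun q => (⟨f q, hfW q⟩ : W) := by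
    intro q q' hqq'
    have hfq : f q = f q' := congrArg Subtype.val hqq'
    rw [← Quot.out_eq q, ← Quot.out_eq q']
    exact Quot.sound <| (hf q).trans <| hfq ▸ (hf q').symm
  have := hW.to_subtype
  have := hinj.countable
  exact (Cardinal.mk_le_aleph0.trans_lt aleph0_lt_aleph_one).ne h

def sigEquivClass (T : IForm ar) (β : Ordinal) (M : Str ar) : Set (Str ar) :=
  {N | SatS N T ∧ SigEquiv β M N}

variable {T : IForm ar} {β : Ordinal}

theorem MinimalCex.countablyManyUpToIso_or (hT : MinimalCex T) {φ : IForm ar}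
    (hφ : SentenceF φ) :
    CountablyManyUpToIso {A | SatS A T ∧ SatS A φ} ∨
      CountablyManyUpToIso {A | SatS A T ∧ ¬ SatS A φ} :=
  (hT.2.2 φ hφ).imp
    (fun ⟨W, hW, hcov⟩ => ⟨W, hW, fun A hA => hcov A (hA.1.and hA.2)⟩)
    (fun ⟨W, hW, hcov⟩ => ⟨W, hW, fun A hA => hcov A (hA.1.and hA.2)⟩)

theorem MinimalCex.countablyManyUpToIso_sigEquivClass_or (hT : MinimalCex T) {M N : Str ar}
    (hMN : ¬ SigEquiv β M N) :
    CountablyManyUpToIso (sigEquivClass T β M) ∨ CountablyManyUpToIso (sigEquivClass T β N) := by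
  obtain ⟨φ, hφ, hsent, hMNφ⟩ :
      ∃ φ, IsSig β φ ∧ SentenceF φ ∧ ¬ (SatS M φ ↔ SatS N φ) := by
    simpa [SigEquiv] using hMN
  wlog hM : SatS M φ generalizing M N
  · exact (this (fun h => hMN h.symm) (fun h => hMNφ h.symm) (by tauto)).symm
  have hN : ¬ SatS N φ := fun hN => hMNφ (iff_of_true hM hN)
  refine (hT.countablyManyUpToIso_or hsent).imp (fun h => h.mono ?_) (fun h => h.mono ?_)
  · exact fun A ⟨hA, hMA⟩ => ⟨hA, (hMA φ hφ hsent).1 hM⟩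
  · exact fun A ⟨hA, hNA⟩ => ⟨hA, fun hAφ => hN ((hNA φ hφ hsent).2 hAφ)⟩

theorem MinimalCex.exists_not_countablyManyUpToIso_sigEquivClass (hT : MinimalCex T)
    (hβ : β < ω₁) : ∃ M, SatS M T ∧ ¬ CountablyManyUpToIso (sigEquivClass T β M) := by
  obtain ⟨S, hS, hcov⟩ := hT.2.1 β (by rwa [ord_aleph])
  by_contra! h
  refine hT.1.not_countablyManyUpToIso <|
    (countablyManyUpToIso_biUnion (hS.mono (sep_subset S (SatS · T))) fun s hs => h s hs.2).mono
      fun A hA => ?_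
  obtain ⟨s, hs, hsT, hAs⟩ := hcov A hA
  exact mem_iUnion₂.2 ⟨s, ⟨hs, hsT⟩, hA, hAs.symm⟩

theorem MinimalCex.exists_countablyManyUpToIso_not_sigEquiv (hT : MinimalCex T)
    (hβ : β < ω₁) : ∃ M, CountablyManyUpToIso {N | SatS N T ∧ ¬ SigEquiv β M N} := by
  obtain ⟨S, hS, hcov⟩ := hT.2.1 β (by rwa [ord_aleph])
  obtain ⟨M, -, hM⟩ := hT.exists_not_countablyManyUpToIso_sigEquivClass hβ
  refine ⟨M, (countablyManyUpToIso_biUnion (hS.mono (sep_subset S (¬ SigEquiv β M ·)))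
    fun s hs => (hT.countablyManyUpToIso_sigEquivClass_or hs.2).resolve_left hM).mono ?_⟩
  rintro N ⟨hN, hMN⟩
  obtain ⟨s, hs, -, hNs⟩ := hcov N hN
  exact mem_iUnion₂.2 ⟨s, ⟨hs, fun hMs => hMN (hMs.trans hNs.symm)⟩, hN, hNs.symm⟩

theorem MinimalCex.exists_sigEquiv_of_le_SR (hT : MinimalCex T) (hβ : β < ω₁) :
    ∃ δ < ω₁, ∀ M N : Str ar, SatS M T → SatS N T → δ ≤ SR M → δ ≤ SR N →
      SigEquiv β M N := by
  obtain ⟨M₀, hM₀⟩ := hT.exists_countablyManyUpToIso_not_sigEquiv hβ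
  obtain ⟨δ, hδ, hSR⟩ := hM₀.exists_SR_lt
  have h : ∀ M, SatS M T → δ ≤ SR M → SigEquiv β M₀ M := fun M hM hδM =>
    by_contra fun hM₀M => (hSR M ⟨hM, hM₀M⟩).not_ge hδM
  exact ⟨δ, hδ, fun M N hM hN hδM hδN => (h M hM hδM).symm.trans (h N hN hδN)⟩

end Counting

section Club

def closurePointsBelow (o : Ordinal) (G : Ordinal → Ordinal) : Set Ordinal :=
  {α | α < o ∧ ∀ β < α, G β < α}

theorem sSup_mem_closurePointsBelow {o : Ordinal} {G : Ordinal → Ordinal} {s : Set Ordinal}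
    (hs : s ⊆ closurePointsBelow o G) (hlt : sSup s < o) : sSup s ∈ closurePointsBelow o G := by
  have hbdd : BddAbove s := ⟨o, fun α hα => (hs hα).1.le⟩
  refine ⟨hlt, fun β hβ => ?_⟩
  obtain ⟨α, hα, hβα⟩ := (lt_csSup_iff' hbdd).1 hβ
  exact ((hs hα).2 β hβα).trans_le (le_csSup hbdd hα)

theorem exists_gt_mem_closurePointsBelow {κ : Cardinal} (hκ : κ.IsRegular) (hκ₀ : κ ≠ ℵ₀)
    {G : Ordinal → Ordinal} (hG : ∀ β < κ.ord, G β < κ.ord) {β : Ordinal} (hβ : β < κ.ord) :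
    ∃ α ∈ closurePointsBelow κ.ord G, β < α := by
  set F : Ordinal → Ordinal := fun γ => ⨆ ξ : Iio γ, G ξ + 1
  have hF : ∀ γ < κ.ord, F γ < κ.ord := fun γ hγ =>
    lift_iSup_add_one_lt_of_lt_cof
      (by rwa [← lift_cof, hκ.cof_ord, Cardinal.mk_Iio_ordinal, Cardinal.lift_lift,
        Cardinal.lift_lt, ← Cardinal.lt_ord])
      fun ξ => hG ξ (ξ.2.trans hγ)
  refine ⟨nfp F (β + 1), ⟨nfp_lt_ord_of_isRegular hκ hκ₀ hF
    ((isSuccLimit_ord hκ.aleph0_le).add_one_lt hβ), fun ξ hξ => ?_⟩,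
    (lt_add_one β).trans_le (le_nfp F _)⟩
  obtain ⟨n, hn⟩ := lt_nfp_iff.1 hξ
  calc G ξ < F (F^[n] (β + 1)) := lt_iSup_add_one (fun ξ : Iio _ => G ξ) ⟨ξ, hn⟩
    _ = F^[n + 1] (β + 1) := (Function.iterate_succ_apply' F n _).symm
    _ ≤ nfp F (β + 1) := iterate_le_nfp F _ _

end Club

/-- If `T` is a minimal counterexample to Vaught's conjecture, there is
a club `C ⊆ ω₁` such that for every `α ∈ C`, any two countable models of `T` of Scott
rank at least `α` are `Σ^in_β`-elementary equivalent for all `β < α`. -/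
theorem minimal_cex_club {ar : ℕ → ℕ} (T : IForm ar) (hT : MinimalCex T) :
    ∃ C : Set Ordinal,
      (∀ α ∈ C, α < (Cardinal.aleph 1).ord) ∧
      (∀ β < (Cardinal.aleph 1).ord, ∃ α ∈ C, β < α) ∧
      (∀ s : Set Ordinal, s ⊆ C → s.Nonempty → sSup s < (Cardinal.aleph 1).ord →
        sSup s ∈ C) ∧
      (∀ α ∈ C, ∀ A B : Str ar, SatS A T → SatS B T → α ≤ SR A → α ≤ SR B →
        ∀ β < α, SigEquiv β A B) := by
  rw [ord_aleph]
  choose! G hGω₁ hG using fun β (hβ : β < ω₁) => hT.exists_sigEquiv_of_le_SR hβ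
  refine ⟨closurePointsBelow ω₁ G, fun α hα => hα.1, ?_,
    fun s hs _ hlt => sSup_mem_closurePointsBelow hs hlt, ?_⟩
  · rw [← ord_aleph] at hGω₁ ⊢
    exact fun β => exists_gt_mem_closurePointsBelow isRegular_aleph_one
      aleph0_lt_aleph_one.ne' hGω₁
  rintro α ⟨hα, hαG⟩ A B hA hB hαA hαB β hβ
  exact hG β (hβ.trans hα) A B hA hB ((hαG β hβ).le.trans hαA) ((hαG β hβ).le.trans hαB)
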